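/- arXiv:1507.05104 — 2 statements merged into one kernel-verified Lean document; each statement's English description precedes it below -/
import Mathlib

section
/- Let a ∈ ℝ², f : ℝ → ℝ locally Lipschitz, and u(x) = f(|x−a|²)·(x−a)^⊥. Then the solution of X'(t) = u(X(t)) with X(0) = x is given explicitly by X(t) = a + e^{i t f(|x−a|²)}·(x−a), where e^{iθ} denotes the rotation of ℝ² by angle θ. -/
open Complex

/-- The solution of `X' = u(X)`, `X(0) = x`, with `u(z) = f(|z-a|²)·(z-a)^⊥`
(identifying `ℝ² ≅ ℂ`, `v^⊥ = I·v`) is given explicitly by the rotation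
`X(t) = a + e^{i t f(|x-a|²)} (x-a)`. -/
theorem stmt_2 (a : ℂ) (f : ℝ → ℝ) (hf : LocallyLipschitz f)
    (x : ℂ) (X : ℝ → ℂ) (hX0 : X 0 = x)
    (hX : ∀ t, HasDerivAt X (f (‖X t - a‖ ^ 2) • (Complex.I * (X t - a))) t) :
    ∀ t : ℝ, X t = a + Complex.exp (Complex.I * (t * f (‖x - a‖ ^ 2))) * (x - a) := by
  -- derivative of X - a
  have hXa : ∀ t, HasDerivAt (fun t => X t - a)
      (f (‖X t - a‖ ^ 2) • (Complex.I * (X t - a))) t := fun t => (hX t).sub_const a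
  -- the norm squared is constant
  have hmul : ∀ t, HasDerivAt (fun t => (X t - a) * star (X t - a)) 0 t := by
    intro t
    have h := (hXa t).fun_mul (hXa t).star
    refine h.congr_deriv ?_
    simp only [Complex.star_def, smul_eq_mul]
    push_cast
    simp [Complex.conj_I]
    ring
  have hconst : ∀ t, (X t - a) * star (X t - a) = (X 0 - a) * star (X 0 - a) := by
    intro t
    have : (fun t => (X t - a) * star (X t - a)) t
        = (fun t => (X t - a) * star (X t - a)) 0 :=
      is_const_of_deriv_eq_zero (fun s => (hmul s).differentiableAt)
        (fun s => (hmul s).deriv) t 0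
    simpa using this
  have hnorm : ∀ t, ‖X t - a‖ ^ 2 = ‖x - a‖ ^ 2 := by
    intro t
    have h := hconst t
    simp only [Complex.star_def, Complex.mul_conj, hX0] at h
    have h2 : Complex.normSq (X t - a) = Complex.normSq (x - a) := by exact_mod_cast h
    rw [← Complex.sq_norm, ← Complex.sq_norm] at h2
    simpa using h2
  set c : ℝ := f (‖x - a‖ ^ 2) with hc
  -- auxiliary function Y
  have hexp : ∀ (b : ℂ) (t : ℝ), HasDerivAt (fun s : ℝ => Complex.exp (b * s))
      (b * Complex.exp (b * t)) t := by
    intro b t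
    have h1 : HasDerivAt (fun s : ℝ => (s : ℂ)) 1 t := Complex.ofRealCLM.hasDerivAt
    have h2 := (h1.const_mul b).cexp
    simpa [mul_comm] using h2
  have hY : ∀ t : ℝ, HasDerivAt (fun s : ℝ => Complex.exp (-(Complex.I * c) * s) * (X s - a)) 0 t := by
    intro t
    have h := (hexp (-(Complex.I * c)) t).fun_mul (hXa t)
    refine h.congr_deriv ?_
    rw [hnorm t, ← hc, Complex.real_smul]
    ring
  have hYconst : ∀ t : ℝ, Complex.exp (-(Complex.I * c) * t) * (X t - a) = x - a := by
    intro t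
    have : (fun s : ℝ => Complex.exp (-(Complex.I * c) * s) * (X s - a)) t
        = (fun s : ℝ => Complex.exp (-(Complex.I * c) * s) * (X s - a)) 0 :=
      is_const_of_deriv_eq_zero (fun s => (hY s).differentiableAt)
        (fun s => (hY s).deriv) t 0
    simpa [hX0] using this
  intro t
  have h := hYconst t
  have h2 := congrArg (fun z => Complex.exp (Complex.I * c * t) * z) h
  rw [← mul_assoc, ← Complex.exp_add] at h2
  have h3 : Complex.I * c * t + -(Complex.I * c) * t = 0 := by ring
  rw [h3, Complex.exp_zero, one_mul] at h2
  rw [show Complex.I * (c:ℂ) * t = Complex.I * (t * c) by ring] at h2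
  rw [eq_add_of_sub_eq' h2]
end

section
/- Let a ∈ ℝ², and let F : ℝ² → ℝ² be of the form F(x) = a + e^{iθ(|x−a|)}·(x−a) for some function θ : [0,∞) → ℝ (a 'radial rotation' about a). Then F is measure preserving on ℝ² (it pushes Lebesgue measure forward to itself), provided θ is measurable. -/
open Complex MeasureTheory Set Real

private lemma lintegral_polar_real_aux (g : ℝ × ℝ → ENNReal) :
    ∫⁻ p, g p = ∫⁻ p in polarCoord.target, ENNReal.ofReal p.1 * g (polarCoord.symm p) := by
  set B : ℝ × ℝ → ℝ × ℝ →L[ℝ] ℝ × ℝ := fun p =>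
    LinearMap.toContinuousLinearMap (Matrix.toLin (Module.Basis.finTwoProd ℝ) (Module.Basis.finTwoProd ℝ)
      !![Real.cos p.2, -p.1 * Real.sin p.2; Real.sin p.2, p.1 * Real.cos p.2])
  have A : ∀ p ∈ polarCoord.target,
      HasFDerivWithinAt polarCoord.symm (B p) polarCoord.target p :=
    fun p _ => (hasFDerivAt_polarCoord_symm p).hasFDerivWithinAt
  have B_det : ∀ p, (B p).det = p.1 := by
    intro p
    conv_rhs => rw [← one_mul p.1, ← Real.cos_sq_add_sin_sq p.2]
    simp only [B, neg_mul, LinearMap.det_toContinuousLinearMap, LinearMap.det_toLin,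
      Matrix.det_fin_two_of, sub_neg_eq_add]
    ring
  have hinj : Set.InjOn polarCoord.symm polarCoord.target := by
    have := polarCoord.symm.injOn
    rwa [polarCoord.symm_source] at this
  calc ∫⁻ p, g p = ∫⁻ p in polarCoord.source, g p := by
        rw [← setLIntegral_univ]
        exact (setLIntegral_congr polarCoord_source_ae_eq_univ).symm
    _ = ∫⁻ p in polarCoord.symm '' polarCoord.target, g p := by
        rw [polarCoord.symm_image_target_eq_source]
    _ = ∫⁻ p in polarCoord.target, ENNReal.ofReal |(B p).det| * g (polarCoord.symm p) :=
        lintegral_image_eq_lintegral_abs_det_fderiv_mul volume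
          polarCoord.open_target.measurableSet A hinj g
    _ = ∫⁻ p in polarCoord.target, ENNReal.ofReal p.1 * g (polarCoord.symm p) := by
        apply setLIntegral_congr_fun polarCoord.open_target.measurableSet
        intro p hp; dsimp only
        rw [B_det, abs_of_pos hp.1]

private lemma lintegral_polar_complex_aux (g : ℂ → ENNReal) :
    ∫⁻ z, g z = ∫⁻ p in Set.Ioi (0:ℝ) ×ˢ Set.Ioo (-π) π,
      ENNReal.ofReal p.1 * g (Complex.polarCoord.symm p) := by
  rw [← (Complex.volume_preserving_equiv_real_prod.symm).lintegral_comp_emb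
    measurableEquivRealProd.symm.measurableEmbedding g, lintegral_polar_real_aux]
  rfl

private lemma periodic_shift_aux (k : ℝ → ENNReal) (hk : ∀ x, k (x + 2 * π) = k x) (c : ℝ) :
    ∫⁻ φ in Set.Ioo (-π) π, k (φ + c) = ∫⁻ φ in Set.Ioo (-π) π, k φ := by
  have h2π : (0:ℝ) < 2 * π := by positivity
  have hIoo : ∀ f : ℝ → ENNReal, ∫⁻ φ in Set.Ioo (-π) π, f φ = ∫⁻ φ in Set.Ioc (-π) π, f φ :=
    fun f => setLIntegral_congr Ioo_ae_eq_Ioc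
  rw [hIoo, hIoo]
  have key : ∫⁻ φ in Set.Ioc (-π) π, k (φ + c) = ∫⁻ φ in Set.Ioc (-π + c) (π + c), k φ := by
    have := (measurePreserving_add_right volume c).setLIntegral_comp_preimage_emb
      (Homeomorph.addRight c).measurableEmbedding k (Set.Ioc (-π + c) (π + c))
    simpa using this
  rw [key]
  haveI : VAddInvariantMeasure (AddSubgroup.zmultiples (2*π)) ℝ volume :=
    ⟨fun c s _ => measure_preimage_add _ _ _⟩
  have hper : Function.Periodic k (2 * π) := hk
  have h1 : ∫⁻ φ in Set.Ioc (-π + c) ((-π + c) + 2*π), k φ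
      = ∫⁻ φ in Set.Ioc (-π) ((-π) + 2*π), k φ := by
    refine MeasureTheory.IsAddFundamentalDomain.setLIntegral_eq
      (G := AddSubgroup.zmultiples (2*π)) ?_ ?_ k ?_
    · exact isAddFundamentalDomain_Ioc h2π _
    · exact isAddFundamentalDomain_Ioc h2π _
    · exact hper.map_vadd_zmultiples
  have e1 : (-π + c) + 2*π = π + c := by ring
  have e2 : (-π) + 2*π = π := by ring
  rw [e1, e2] at h1
  exact h1

private lemma pcs_formula (p : ℝ × ℝ) :
    Complex.polarCoord.symm p
      = (p.1 : ℂ) * Complex.exp ((p.2 : ℂ) * Complex.I) := by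
  rw [Complex.polarCoord_symm_apply, Complex.exp_mul_I, Complex.ofReal_cos, Complex.ofReal_sin]

private lemma pcs_measurable : Measurable (Complex.polarCoord.symm : ℝ × ℝ → ℂ) := by
  have h : (Complex.polarCoord.symm : ℝ × ℝ → ℂ)
      = fun p => (p.1 : ℂ) * Complex.exp ((p.2 : ℂ) * Complex.I) := funext pcs_formula
  rw [h]
  fun_prop

private lemma radial_rotation_lintegral (θ : ℝ → ℝ) (hθ : Measurable θ) (g : ℂ → ENNReal)
    (hg : Measurable g) :
    ∫⁻ x, g (Complex.exp ((θ ‖x‖ : ℂ) * Complex.I) * x) = ∫⁻ x, g x := by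
  set G : ℂ → ℂ := fun x => Complex.exp ((θ ‖x‖ : ℂ) * Complex.I) * x with hG
  -- the shifted polar map
  set H : ℝ × ℝ → ℂ := fun p => Complex.polarCoord.symm (p.1, p.2 + θ p.1) with hH
  have hHmeas : Measurable H := by
    apply pcs_measurable.comp
    exact measurable_fst.prodMk (measurable_snd.add (hθ.comp measurable_fst))
  have key : ∀ p : ℝ × ℝ, 0 < p.1 → G (Complex.polarCoord.symm p) = H p := by
    intro p hp
    have hnorm : ‖Complex.polarCoord.symm p‖ = p.1 := by
      rw [Complex.norm_polarCoord_symm, abs_of_pos hp]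
    have hnorm' : ‖(p.1:ℂ) * Complex.exp ((p.2:ℂ) * Complex.I)‖ = p.1 := by
      rw [← pcs_formula]; exact hnorm
    simp only [hG, hH, pcs_formula, hnorm']
    rw [Complex.ofReal_add, add_mul, Complex.exp_add]
    ring
  calc ∫⁻ x, g (G x)
      = ∫⁻ p in Set.Ioi (0:ℝ) ×ˢ Set.Ioo (-π) π,
          ENNReal.ofReal p.1 * g (G (Complex.polarCoord.symm p)) :=
        lintegral_polar_complex_aux (fun z => g (G z))
    _ = ∫⁻ p in Set.Ioi (0:ℝ) ×ˢ Set.Ioo (-π) π, ENNReal.ofReal p.1 * g (H p) := by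
        refine setLIntegral_congr_fun ((measurableSet_Ioi).prod measurableSet_Ioo) ?_
        intro p hp; dsimp only
        rw [key p hp.1]
    _ = ∫⁻ r in Set.Ioi (0:ℝ), ∫⁻ φ in Set.Ioo (-π) π,
          ENNReal.ofReal r * g (H (r, φ)) := by
        rw [Measure.volume_eq_prod, ← Measure.prod_restrict, lintegral_prod]
        exact ((ENNReal.measurable_ofReal.comp measurable_fst).mul
          (hg.comp hHmeas)).aemeasurable
    _ = ∫⁻ r in Set.Ioi (0:ℝ), ∫⁻ φ in Set.Ioo (-π) π,
          ENNReal.ofReal r * g (Complex.polarCoord.symm (r, φ)) := by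
        refine lintegral_congr fun r => ?_
        have := periodic_shift_aux
          (fun φ => ENNReal.ofReal r * g (Complex.polarCoord.symm (r, φ)))
          (fun φ => by
            have : Complex.polarCoord.symm (r, φ + 2 * π) = Complex.polarCoord.symm (r, φ) := by
              rw [Complex.polarCoord_symm_apply, Complex.polarCoord_symm_apply]
              simp [Real.cos_add_two_pi, Real.sin_add_two_pi]
            simp only [this]) (θ r)
        simpa [hH] using this
    _ = ∫⁻ p in Set.Ioi (0:ℝ) ×ˢ Set.Ioo (-π) π,
          ENNReal.ofReal p.1 * g (Complex.polarCoord.symm p) := by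
        rw [Measure.volume_eq_prod, ← Measure.prod_restrict, lintegral_prod]
        exact ((ENNReal.measurable_ofReal.comp measurable_fst).mul
          (hg.comp pcs_measurable)).aemeasurable
    _ = ∫⁻ x, g x := (lintegral_polar_complex_aux g).symm

private lemma radial_rotation_mp (θ : ℝ → ℝ) (hθ : Measurable θ) :
    MeasurePreserving (fun x : ℂ => Complex.exp ((θ ‖x‖ : ℂ) * Complex.I) * x)
      volume volume := by
  have hGmeas : Measurable (fun x : ℂ => Complex.exp ((θ ‖x‖ : ℂ) * Complex.I) * x) := by
    apply Measurable.mul _ measurable_id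
    apply Complex.continuous_exp.measurable.comp
    exact (Complex.measurable_ofReal.comp (hθ.comp measurable_norm)).mul measurable_const
  refine ⟨hGmeas, ?_⟩
  refine Measure.ext fun s hs => ?_
  rw [Measure.map_apply hGmeas hs]
  have h1 : volume ((fun x : ℂ => Complex.exp ((θ ‖x‖ : ℂ) * Complex.I) * x) ⁻¹' s)
      = ∫⁻ x, s.indicator (1 : ℂ → ENNReal)
          (Complex.exp ((θ ‖x‖ : ℂ) * Complex.I) * x) := by
    rw [← lintegral_indicator_one (hGmeas hs)]
    refine lintegral_congr fun x => ?_
    by_cases h : Complex.exp ((θ ‖x‖ : ℂ) * Complex.I) * x ∈ s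
    · rw [Set.indicator_of_mem h, Set.indicator_of_mem (by exact h)]; rfl
    · rw [Set.indicator_of_notMem h, Set.indicator_of_notMem (by exact h)]
  rw [h1, radial_rotation_lintegral θ hθ (s.indicator (1 : ℂ → ENNReal))
    (measurable_one.indicator hs), lintegral_indicator_one hs]

/-- A radial rotation `F(x) = a + e^{iθ(|x-a|)}(x-a)` about a center `a`, with
measurable angle function `θ`, preserves Lebesgue measure on `ℝ² ≅ ℂ`. -/
theorem stmt_3 (a : ℂ) (θ : ℝ → ℝ) (hθ : Measurable θ) :
    MeasurePreserving
      (fun x : ℂ => a + Complex.exp ((θ ‖x - a‖ : ℂ) * Complex.I) * (x - a))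
      volume volume := by
  have h1 : MeasurePreserving (fun x : ℂ => x - a) volume volume := by
    simpa [sub_eq_add_neg] using measurePreserving_add_right (volume : Measure ℂ) (-a)
  have h2 := radial_rotation_mp θ hθ
  have h3 : MeasurePreserving (fun x : ℂ => a + x) volume volume :=
    measurePreserving_add_left (volume : Measure ℂ) a
  have := (h3.comp h2).comp h1
  convert this using 1
  rfl
end
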